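/- arXiv:2410.18915 — 2 statements merged into one kernel-verified Lean document; each statement's English description precedes it below -/
import Mathlib

section
/- Assume Constraints I and II. Then for every probability distribution p over ℕ with finite support, Σᵢ Q(p_i) ≤ (1+δ)·|supp(p)|; in particular, since δ ≤ ε/20, Σᵢ Q(p_i) ≤ (1+ε/4)·|supp(p)|. -/
/-- The degree-`d` Chebyshev polynomial of the first kind, as a real function. -/
noncomputable def cheb : ℕ → ℝ → ℝ
  | 0, _ => 1
  | 1, x => x
  | (n+2), x => 2 * x * cheb (n+1) x - cheb n x

/-- `ψ(x) = (r+ℓ−2x)/(r−ℓ)`. -/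
noncomputable def psiMap (ℓ r x : ℝ) : ℝ := (r + ℓ - 2 * x) / (r - ℓ)

/-- `δ = 1 / T_d(1 + 2α/(1−α))` where `α = ℓ/r`. -/
noncomputable def cDelta (ℓ r : ℝ) (d : ℕ) : ℝ :=
  1 / cheb d (1 + 2 * (ℓ / r) / (1 - ℓ / r))

/-- `P_d(x) = −δ·T_d(ψ(x))`. -/
noncomputable def Pd (ℓ r : ℝ) (d : ℕ) (x : ℝ) : ℝ := - cDelta ℓ r d * cheb d (psiMap ℓ r x)

/-- `Q(x) = 1 + e^{−mx}·P_d(x)`. -/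
noncomputable def Qfun (ℓ r : ℝ) (d : ℕ) (m x : ℝ) : ℝ :=
  1 + Real.exp (-(m * x)) * Pd ℓ r d x

/-- `Q*(x) = 1 + P_d(x)` for `x < ℓ` and `1 − δ` for `x ≥ ℓ`. -/
noncomputable def Qstar (ℓ r : ℝ) (d : ℕ) (x : ℝ) : ℝ :=
  if x < ℓ then 1 + Pd ℓ r d x else 1 - cDelta ℓ r d

/-- Constraint I: `r ≥ 3ℓ` and `d ≥ 4·√((r−ℓ)/(2ℓ))·ln(20/ε)`. -/
def ConstraintI (ℓ r : ℝ) (d : ℕ) (ε : ℝ) : Prop :=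
  r ≥ 3 * ℓ ∧ (d : ℝ) ≥ 4 * Real.sqrt ((r - ℓ) / (2 * ℓ)) * Real.log (20 / ε)

/-- Constraint II: `m ≥ 5.5·d/(r−ℓ)`. -/
def ConstraintII (ℓ r : ℝ) (d : ℕ) (m : ℝ) : Prop :=
  m ≥ 5.5 * d / (r - ℓ)

/-- Constraint III: `m ≤ ε²n²/256` and
`d⁶·9^d·((r+ℓ)/(r−ℓ))^{2d−2} ≤ (1/4)·m·(r−ℓ)²·n²`. -/
def ConstraintIII (ℓ r : ℝ) (d : ℕ) (m ε : ℝ) (n : ℕ) : Prop :=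
  m ≤ ε ^ 2 * (n : ℝ) ^ 2 / 256 ∧
  (d : ℝ) ^ 6 * 9 ^ d * ((r + ℓ) / (r - ℓ)) ^ (2 * d - 2) ≤
    (1 / 4) * m * (r - ℓ) ^ 2 * (n : ℝ) ^ 2

/-- Constraint IV: `ℓ ≤ ε/(20n)`. -/
def ConstraintIV (ℓ ε : ℝ) (n : ℕ) : Prop := ℓ ≤ ε / (20 * n)

/-- Constraint IVb: `ℓ ≤ (1/3)·(ε/n)·log₂(1/ε)`. -/
def ConstraintIVb (ℓ ε : ℝ) (n : ℕ) : Prop :=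
  ℓ ≤ (1 / 3) * (ε / n) * Real.logb 2 (1 / ε)

/-- A probability distribution over `ℕ`: a nonnegative sequence summing to `1`. -/
def IsDist (p : ℕ → ℝ) : Prop := (∀ i, 0 ≤ p i) ∧ ∑' i, p i = 1

/-- Total variation distance `(1/2)·Σᵢ|p_i − q_i|`. -/
noncomputable def dTV (p q : ℕ → ℝ) : ℝ := (1 / 2) * ∑' i, |p i - q i|

/-- `p` is `ε`-far from having support size at most `n`. -/
def FarFromSuppSize (ε : ℝ) (n : ℕ) (p : ℕ → ℝ) : Prop :=
  ∀ q : ℕ → ℝ, IsDist q → {i | q i ≠ 0}.encard ≤ n → dTV p q > ε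

/-- `Φ(λ) = (1 + ε/(λ·ℓ·n))·Q*(λ·ℓ)`. -/
noncomputable def Phi (ℓ r : ℝ) (d : ℕ) (ε : ℝ) (n : ℕ) (lam : ℝ) : ℝ :=
  (1 + ε / (lam * ℓ * n)) * Qstar ℓ r d (lam * ℓ)

lemma cheb_two_step (n : ℕ) (x : ℝ) : cheb (n+2) x = 2*x*cheb (n+1) x - cheb n x := rfl

lemma cheb_closed (y s : ℝ) (hs : s^2 = y^2 - 1) :
    ∀ d, cheb d y = ((y+s)^d + (y-s)^d)/2
  | 0 => by simp [cheb]
  | 1 => by show y = _; ring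
  | (n+2) => by
      rw [cheb_two_step, cheb_closed y s hs (n+1), cheb_closed y s hs n]
      linear_combination (-((y+s)^n+(y-s)^n)/2) * hs

lemma cheb_neg : ∀ (d : ℕ) (y : ℝ), cheb d (-y) = (-1)^d * cheb d y
  | 0, y => by simp [cheb]
  | 1, y => by simp [cheb]
  | (n+2), y => by
      rw [cheb_two_step, cheb_two_step, cheb_neg (n+1) y, cheb_neg n y]
      ring

lemma cheb_cos : ∀ (d : ℕ) (θ : ℝ), cheb d (Real.cos θ) = Real.cos (d * θ)
  | 0, θ => by simp [cheb]
  | 1, θ => by simp [cheb]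
  | (n+2), θ => by
      rw [cheb_two_step, cheb_cos (n+1) θ, cheb_cos n θ]
      push_cast
      rw [show ((n:ℝ)+2)*θ = ((n:ℝ)+1)*θ + θ by ring,
          show (n:ℝ)*θ = ((n:ℝ)+1)*θ - θ by ring, Real.cos_add, Real.cos_sub]
      ring

lemma cheb_abs_le_one (d : ℕ) {y : ℝ} (h1 : -1 ≤ y) (h2 : y ≤ 1) : |cheb d y| ≤ 1 := by
  rw [← Real.cos_arccos h1 h2, cheb_cos]
  exact Real.abs_cos_le_one _

lemma cheb_one_le (d : ℕ) {y : ℝ} (hy : 1 ≤ y) : 1 ≤ cheb d y := by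
  have h0 : (0:ℝ) ≤ y^2 - 1 := by nlinarith
  have hs : Real.sqrt (y^2-1)^2 = y^2-1 := Real.sq_sqrt h0
  set s := Real.sqrt (y^2-1)
  have hsnn : 0 ≤ s := Real.sqrt_nonneg _
  rw [cheb_closed y s hs d]
  have hab : (y+s)*(y-s) = 1 := by nlinarith
  have ha : 1 ≤ y + s := by linarith
  have hb : 0 ≤ y - s := by nlinarith
  have hA : 1 ≤ (y+s)^d := one_le_pow₀ ha
  have hprod : (y+s)^d * (y-s)^d = 1 := by rw [← mul_pow, hab, one_pow]
  have hB : (y-s)^d ≤ 1 := by nlinarith [pow_nonneg hb d]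
  nlinarith [mul_nonneg (sub_nonneg.2 hA) (sub_nonneg.2 hB)]

lemma add_inv_mono {A C : ℝ} (hA : 1 ≤ A) (hAC : A ≤ C) : A + A⁻¹ ≤ C + C⁻¹ := by
  have hA0 : 0 < A := by linarith
  have hC0 : 0 < C := by linarith
  rw [← sub_nonneg]
  have h : C + C⁻¹ - (A + A⁻¹) = (C-A)*(A*C-1)/(A*C) := by field_simp; ring
  rw [h]
  apply div_nonneg (mul_nonneg (by linarith) (by nlinarith)) (by positivity)

lemma cheb_mono (d : ℕ) {y z : ℝ} (hy : 1 ≤ y) (hyz : y ≤ z) : cheb d y ≤ cheb d z := by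
  have hy0 : (0:ℝ) ≤ y^2 - 1 := by nlinarith
  have hz0 : (0:ℝ) ≤ z^2 - 1 := by nlinarith
  have hs : Real.sqrt (y^2-1)^2 = y^2-1 := Real.sq_sqrt hy0
  have ht : Real.sqrt (z^2-1)^2 = z^2-1 := Real.sq_sqrt hz0
  set s := Real.sqrt (y^2-1)
  set t := Real.sqrt (z^2-1)
  rw [cheb_closed y s hs d, cheb_closed z t ht d]
  have hsnn : 0 ≤ s := Real.sqrt_nonneg _
  have htnn : 0 ≤ t := Real.sqrt_nonneg _
  have hst : s ≤ t := Real.sqrt_le_sqrt (by nlinarith)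
  have ha1 : 1 ≤ y + s := by linarith
  have hc1 : 1 ≤ z + t := by linarith
  have hac : y + s ≤ z + t := by linarith
  have hbi : y - s = (y+s)⁻¹ := eq_inv_of_mul_eq_one_left (by nlinarith)
  have hdi : z - t = (z+t)⁻¹ := eq_inv_of_mul_eq_one_left (by nlinarith)
  rw [hbi, hdi, inv_pow, inv_pow]
  have := add_inv_mono (one_le_pow₀ ha1) (pow_le_pow_left₀ (by linarith) hac d)
  linarith

lemma cheb_le_two_pow (d : ℕ) {y : ℝ} (hy : 1 ≤ y) : cheb d y ≤ (2*y)^d := by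
  have h0 : (0:ℝ) ≤ y^2-1 := by nlinarith
  have hs : Real.sqrt (y^2-1)^2 = y^2-1 := Real.sq_sqrt h0
  set s := Real.sqrt (y^2-1)
  have hsnn : 0 ≤ s := Real.sqrt_nonneg _
  have hsy : s ≤ y := by
    calc s ≤ Real.sqrt (y^2) := Real.sqrt_le_sqrt (by linarith)
    _ = y := Real.sqrt_sq (by linarith)
  rw [cheb_closed y s hs d]
  have h1 : (y+s)^d ≤ (2*y)^d := pow_le_pow_left₀ (by linarith) (by linarith) d
  have h2 : (y-s)^d ≤ (2*y)^d := pow_le_pow_left₀ (by linarith) (by linarith) d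
  linarith

lemma cheb_lower (d : ℕ) {η : ℝ} (hη : 0 ≤ η) :
    (1 + Real.sqrt (2*η))^d / 2 ≤ cheb d (1+η) := by
  have h0 : (0:ℝ) ≤ (1+η)^2 - 1 := by nlinarith
  have hs : Real.sqrt ((1+η)^2-1)^2 = (1+η)^2-1 := Real.sq_sqrt h0
  set s := Real.sqrt ((1+η)^2-1)
  have hsnn : 0 ≤ s := Real.sqrt_nonneg _
  rw [cheb_closed (1+η) s hs d]
  have h1 : Real.sqrt (2*η) ≤ s := Real.sqrt_le_sqrt (by nlinarith)
  have hsb : s ≤ 1+η := by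
    calc s ≤ Real.sqrt ((1+η)^2) := Real.sqrt_le_sqrt (by linarith)
    _ = 1+η := Real.sqrt_sq (by linarith)
  have ha : (1+Real.sqrt (2*η))^d ≤ (1+η+s)^d :=
    pow_le_pow_left₀ (by positivity) (by linarith) d
  have hbpow : 0 ≤ (1+η-s)^d := pow_nonneg (by linarith) d
  linarith

lemma key_bound (ℓ r : ℝ) (hℓ : 0 < ℓ) (hℓr : ℓ < r) (d : ℕ) (m : ℝ)
    (hm : 0 ≤ m) (hmII : 5.5 * d / (r-ℓ) ≤ m) {x : ℝ} (hx0 : 0 ≤ x) (hx1 : x ≤ 1) :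
    Real.exp (-(m*x)) * (-(cheb d (psiMap ℓ r x))) ≤ 1 := by
  have hrl : 0 < r - ℓ := by linarith
  have hexp1 : Real.exp (-(m*x)) ≤ 1 := Real.exp_le_one_iff.2 (by nlinarith)
  have hexp0 : 0 < Real.exp (-(m*x)) := Real.exp_pos _
  rcases le_or_gt x ℓ with h | h
  · have hψ : 1 ≤ psiMap ℓ r x := by
      rw [psiMap, le_div_iff₀ hrl]; linarith
    have hT := cheb_one_le d hψ
    nlinarith
  rcases le_or_gt x r with h2 | h2
  · have hub := abs_le.1 (cheb_abs_le_one d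
      (show -1 ≤ psiMap ℓ r x by rw [psiMap, le_div_iff₀ hrl]; linarith)
      (show psiMap ℓ r x ≤ 1 by rw [psiMap, div_le_one hrl]; linarith))
    have := mul_le_mul_of_nonneg_left (show -(cheb d (psiMap ℓ r x)) ≤ 1 by linarith [hub.1])
      hexp0.le
    nlinarith
  · -- r < x ≤ 1
    have hx' : 0 < x := lt_trans (lt_trans hℓ hℓr) h2
    have hw1 : 1 ≤ (2*x - r - ℓ)/(r-ℓ) := by rw [le_div_iff₀ hrl]; linarith
    have hψ : psiMap ℓ r x = -((2*x-r-ℓ)/(r-ℓ)) := by rw [psiMap]; ring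
    have hcw1 := cheb_one_le d hw1
    have hub := cheb_le_two_pow d hw1
    have h4 : 2*((2*x-r-ℓ)/(r-ℓ)) ≤ 4*x/(r-ℓ) := by
      rw [show 2*((2*x-r-ℓ)/(r-ℓ)) = (2*(2*x-r-ℓ))/(r-ℓ) by ring,
        div_le_div_iff₀ hrl hrl]
      nlinarith
    have hupos : 0 < 4*x/(r-ℓ) := by positivity
    have hpow : (2*((2*x-r-ℓ)/(r-ℓ)))^d ≤ (4*x/(r-ℓ))^d :=
      pow_le_pow_left₀ (by linarith) h4 d
    set u := 4*x/(r-ℓ) with hudef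
    have hT : -(cheb d (psiMap ℓ r x)) ≤ u^d := by
      rw [hψ, cheb_neg]
      rcases Nat.even_or_odd d with he | ho
      · rw [he.neg_one_pow]; nlinarith
      · rw [ho.neg_one_pow]; nlinarith
    have hlog : Real.log u ≤ Real.log 4 + (x/(r-ℓ) - 1) := by
      rw [show u = 4 * (x/(r-ℓ)) by rw [hudef]; ring,
        Real.log_mul (by norm_num) (ne_of_gt (by positivity))]
      have := Real.log_le_sub_one_of_pos (show 0 < x/(r-ℓ) by positivity)
      linarith
    have hlog4 : Real.log 4 < 1.39 := by
      rw [show (4:ℝ) = 2^2 by norm_num, Real.log_pow]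
      have := Real.log_two_lt_d9; push_cast; linarith
    have ht1 : 1 ≤ x/(r-ℓ) := by rw [le_div_iff₀ hrl]; nlinarith
    have hmx : 5.5 * d * (x/(r-ℓ)) ≤ m * x := by
      have h5 : 5.5*d/(r-ℓ) * x ≤ m * x := mul_le_mul_of_nonneg_right hmII hx0
      have : 5.5*(d:ℝ)*(x/(r-ℓ)) = 5.5*d/(r-ℓ)*x := by ring
      linarith [this ▸ h5]
    have hdlog : (d:ℝ) * Real.log u ≤ m * x := by
      have h1 : (d:ℝ) * Real.log u ≤ (d:ℝ) * (Real.log 4 + (x/(r-ℓ)-1)) :=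
        mul_le_mul_of_nonneg_left hlog (Nat.cast_nonneg d)
      have h2 : Real.log 4 + (x/(r-ℓ)-1) ≤ 5.5*(x/(r-ℓ)) := by linarith
      have h3 : (d:ℝ)*(Real.log 4 + (x/(r-ℓ)-1)) ≤ (d:ℝ)*(5.5*(x/(r-ℓ))) :=
        mul_le_mul_of_nonneg_left h2 (Nat.cast_nonneg d)
      have h4' : (d:ℝ)*(5.5*(x/(r-ℓ))) = 5.5*(d:ℝ)*(x/(r-ℓ)) := by ring
      linarith
    have hupow : u^d = Real.exp ((d:ℝ) * Real.log u) := by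
      rw [← Real.exp_log hupos, ← Real.exp_nat_mul, Real.log_exp]
    calc Real.exp (-(m*x)) * (-(cheb d (psiMap ℓ r x)))
        ≤ Real.exp (-(m*x)) * u^d := mul_le_mul_of_nonneg_left hT hexp0.le
      _ = Real.exp ((d:ℝ)*Real.log u - m*x) := by
          rw [hupow, ← Real.exp_add]; ring_nf
      _ ≤ 1 := Real.exp_le_one_iff.2 (by linarith)

lemma arg_eq (ℓ r : ℝ) (hℓ : 0 < ℓ) (hℓr : ℓ < r) :
    1 + 2 * (ℓ / r) / (1 - ℓ / r) = (r+ℓ)/(r-ℓ) := by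
  have hr0 : (0:ℝ) < r := hℓ.trans hℓr
  have h1 : (1:ℝ) - ℓ/r ≠ 0 := by
    have : ℓ/r < 1 := (div_lt_one hr0).2 hℓr
    linarith
  have hrl : r - ℓ ≠ 0 := by intro h; apply h1; rw [show ℓ = r by linarith, div_self hr0.ne']; ring
  field_simp
  ring

lemma cDelta_le (ℓ r : ℝ) (hℓ : 0 < ℓ) (hℓr : ℓ < r) (d : ℕ) (ε : ℝ)
    (hε0 : 0 < ε) (hε1 : ε < 1) (hCI : ConstraintI ℓ r d ε) :
    cDelta ℓ r d ≤ ε / 20 := by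
  obtain ⟨hr3, hdI⟩ := hCI
  have hrl : 0 < r - ℓ := by linarith
  have hr0 : 0 < r := hℓ.trans hℓr
  set η := 2*ℓ/(r-ℓ) with hη
  have hη0 : 0 < η := by positivity
  have hη1 : η ≤ 1 := by rw [hη, div_le_one hrl]; linarith
  have hψ0 : (r+ℓ)/(r-ℓ) = 1 + η := by rw [hη]; field_simp; ring
  set u := Real.sqrt (2*η) with hu
  have hu0 : 0 < u := Real.sqrt_pos.2 (by linarith)
  have hu15 : u ≤ 1.5 := by
    rw [hu]
    calc Real.sqrt (2*η) ≤ Real.sqrt 2.25 := Real.sqrt_le_sqrt (by linarith)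
    _ = 1.5 := by
        rw [show (2.25:ℝ) = 1.5^2 by norm_num, Real.sqrt_sq (by norm_num : (0:ℝ) ≤ 1.5)]
  have hlogu : u/4 ≤ Real.log (1+u) := by
    have hq : 0 < 1 - u/4 := by linarith
    have h1 : 1 - u/4 ≤ Real.exp (-(u/4)) := by
      have := Real.add_one_le_exp (-(u/4)); linarith
    have h2 : Real.exp (u/4) ≤ (1 - u/4)⁻¹ := by
      rw [show Real.exp (u/4) = (Real.exp (-(u/4)))⁻¹ by rw [Real.exp_neg, inv_inv]]
      exact inv_anti₀ hq h1
    have h3 : (1-u/4)⁻¹ ≤ 1 + u := by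
      rw [inv_eq_one_div, div_le_iff₀ hq]; nlinarith
    have he : Real.exp (u/4) ≤ 1 + u := le_trans h2 h3
    have := Real.log_le_log (Real.exp_pos _) he
    rwa [Real.log_exp] at this
  have h20 : (0:ℝ) < 20/ε := by positivity
  have hL2 : 2 ≤ Real.log (20/ε) := by
    rw [Real.le_log_iff_exp_le h20]
    have h1 : Real.exp 2 = Real.exp 1 * Real.exp 1 := by rw [← Real.exp_add]; norm_num
    have h2 : Real.exp 1 < 2.7182818286 := Real.exp_one_lt_d9
    have h3 : (20:ℝ) ≤ 20/ε := by
      rw [le_div_iff₀ hε0]; nlinarith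
    nlinarith [Real.exp_pos 1]
  have hL0 : (0:ℝ) < Real.log (20/ε) := by linarith
  have hsqrt2 : (1.4:ℝ) ≤ Real.sqrt 2 := by
    calc (1.4:ℝ) = Real.sqrt (1.4^2) := (Real.sqrt_sq (by norm_num : (0:ℝ) ≤ 1.4)).symm
    _ ≤ Real.sqrt 2 := Real.sqrt_le_sqrt (by norm_num)
  have hsη0 : 0 < Real.sqrt η := Real.sqrt_pos.2 hη0
  have hsη : Real.sqrt ((r-ℓ)/(2*ℓ)) = (Real.sqrt η)⁻¹ := by
    rw [show (r-ℓ)/(2*ℓ) = η⁻¹ by rw [hη, inv_div], Real.sqrt_inv]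
  have hu_eq : u = Real.sqrt 2 * Real.sqrt η := by
    rw [hu, Real.sqrt_mul (by norm_num : (0:ℝ) ≤ 2)]
  have hdI' : 4*(Real.sqrt η)⁻¹*Real.log (20/ε) ≤ (d:ℝ) := by
    rw [← hsη]; exact hdI
  have hstep : Real.sqrt 2 * Real.log (20/ε) ≤ (d:ℝ) * (u/4) := by
    have h1 : 4*(Real.sqrt η)⁻¹*Real.log (20/ε) * (u/4) ≤ (d:ℝ) * (u/4) :=
      mul_le_mul_of_nonneg_right hdI' (by positivity)
    have h2 : 4*(Real.sqrt η)⁻¹*Real.log (20/ε) * (u/4) = Real.sqrt 2 * Real.log (20/ε) := by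
      rw [hu_eq]; field_simp
    linarith
  have hdlog : Real.log 2 + Real.log (20/ε) ≤ (d:ℝ) * Real.log (1+u) := by
    have h1 : (d:ℝ)*(u/4) ≤ (d:ℝ)*Real.log (1+u) :=
      mul_le_mul_of_nonneg_left hlogu (Nat.cast_nonneg d)
    have hlog2 : Real.log 2 < 0.6931471808 := Real.log_two_lt_d9
    nlinarith [mul_nonneg (sub_nonneg.2 hsqrt2) hL0.le]
  have hpow : 40/ε ≤ (1+u)^d := by
    have h1 : (1+u)^d = Real.exp ((d:ℝ) * Real.log (1+u)) := by
      rw [← Real.exp_log (show (0:ℝ) < 1+u by linarith), ← Real.exp_nat_mul, Real.log_exp]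
    have h2 : Real.log (40/ε) = Real.log 2 + Real.log (20/ε) := by
      rw [show (40:ℝ)/ε = 2*(20/ε) by ring, Real.log_mul (by norm_num) (ne_of_gt h20)]
    rw [h1, ← Real.exp_log (show (0:ℝ) < 40/ε by positivity)]
    exact Real.exp_le_exp.2 (by rw [h2]; exact hdlog)
  have hcheb : 20/ε ≤ cheb d ((r+ℓ)/(r-ℓ)) := by
    rw [hψ0]
    have := cheb_lower d hη0.le
    rw [← hu] at this
    have h40 : (40:ℝ)/ε = 2*(20/ε) := by ring
    linarith
  have hC0 : 0 < cheb d ((r+ℓ)/(r-ℓ)) := lt_of_lt_of_le h20 hcheb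
  rw [cDelta, arg_eq ℓ r hℓ hℓr, div_le_div_iff₀ hC0 (by norm_num : (0:ℝ) < 20)]
  have h5 := mul_le_mul_of_nonneg_left hcheb hε0.le
  have h6 : ε * (20/ε) = 20 := by field_simp
  linarith

/-- Under Constraints I and II, for every probability distribution `p` over `ℕ`
with finite support, `Σᵢ Q(p_i) ≤ (1+δ)·|supp(p)|`, and in particular
`Σᵢ Q(p_i) ≤ (1+ε/4)·|supp(p)|`. -/
theorem completeness_bound (ℓ r : ℝ) (hℓ : 0 < ℓ) (hℓr : ℓ < r) (hr : r ≤ 1)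
    (d : ℕ) (hd : 1 ≤ d) (m : ℝ) (hm : 0 ≤ m) (ε : ℝ) (hε0 : 0 < ε) (hε1 : ε < 1)
    (hCI : ConstraintI ℓ r d ε) (hCII : ConstraintII ℓ r d m)
    (p : ℕ → ℝ) (hp : IsDist p) (hfin : {i | p i ≠ 0}.Finite) :
    (∑' i, Qfun ℓ r d m (p i)) ≤ (1 + cDelta ℓ r d) * ({i | p i ≠ 0}.ncard : ℝ) ∧
    (∑' i, Qfun ℓ r d m (p i)) ≤ (1 + ε / 4) * ({i | p i ≠ 0}.ncard : ℝ) := by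
  have hrl : 0 < r - ℓ := by linarith
  have hψ0 : (1:ℝ) ≤ (r+ℓ)/(r-ℓ) := by rw [le_div_iff₀ hrl]; linarith
  have hC1 : 1 ≤ cheb d ((r+ℓ)/(r-ℓ)) := cheb_one_le d hψ0
  have hC0 : 0 < cheb d ((r+ℓ)/(r-ℓ)) := by linarith
  have hδ : cDelta ℓ r d = 1 / cheb d ((r+ℓ)/(r-ℓ)) := by rw [cDelta, arg_eq ℓ r hℓ hℓr]
  have hδ0 : 0 < cDelta ℓ r d := by rw [hδ]; positivity
  have hψ00 : psiMap ℓ r 0 = (r+ℓ)/(r-ℓ) := by rw [psiMap]; norm_num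
  have hQ0 : Qfun ℓ r d m 0 = 0 := by
    rw [Qfun, Pd, hψ00, hδ, mul_zero, neg_zero, Real.exp_zero]
    field_simp
    norm_num
  set s := hfin.toFinset with hsdef
  have hvanish : ∀ i ∉ s, Qfun ℓ r d m (p i) = 0 := by
    intro i hi
    rw [hsdef, Set.Finite.mem_toFinset] at hi
    simp only [Set.mem_setOf_eq, not_not] at hi
    rw [hi, hQ0]
  have hsum : ∑' i, Qfun ℓ r d m (p i) = ∑ i ∈ s, Qfun ℓ r d m (p i) := tsum_eq_sum hvanish
  have hpsum : Summable p := summable_of_ne_finset_zero (s := s) (by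
    intro i hi
    rw [hsdef, Set.Finite.mem_toFinset] at hi
    simpa using hi)
  have hple : ∀ i, p i ≤ 1 := by
    intro i
    rw [← hp.2]
    exact Summable.le_tsum hpsum i (fun j _ => hp.1 j)
  have hterm : ∀ i, Qfun ℓ r d m (p i) ≤ 1 + cDelta ℓ r d := by
    intro i
    rw [Qfun, Pd]
    have hk := key_bound ℓ r hℓ hℓr d m hm hCII (hp.1 i) (hple i)
    have he : Real.exp (-(m * p i)) * (-cDelta ℓ r d * cheb d (psiMap ℓ r (p i)))
        = cDelta ℓ r d * (Real.exp (-(m * p i)) * (-(cheb d (psiMap ℓ r (p i))))) := by ring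
    rw [he]
    nlinarith [mul_le_mul_of_nonneg_left hk hδ0.le]
  have hcard : ({i | p i ≠ 0}.ncard : ℝ) = (s.card : ℝ) := by
    rw [Set.ncard_eq_toFinset_card _ hfin]
  have hmain : ∑' i, Qfun ℓ r d m (p i) ≤ (1 + cDelta ℓ r d) * ({i | p i ≠ 0}.ncard : ℝ) := by
    rw [hsum, hcard]
    calc ∑ i ∈ s, Qfun ℓ r d m (p i) ≤ ∑ _i ∈ s, (1 + cDelta ℓ r d) :=
          Finset.sum_le_sum (fun i _ => hterm i)
      _ = s.card • (1 + cDelta ℓ r d) := Finset.sum_const _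
      _ = (1 + cDelta ℓ r d) * (s.card : ℝ) := by rw [nsmul_eq_mul]; ring
  refine ⟨hmain, ?_⟩
  have hδε : cDelta ℓ r d ≤ ε/20 := cDelta_le ℓ r hℓ hℓr d ε hε0 hε1 hCI
  have hcn : (0:ℝ) ≤ ({i | p i ≠ 0}.ncard : ℝ) := Nat.cast_nonneg _
  have := mul_le_mul_of_nonneg_right (show 1 + cDelta ℓ r d ≤ 1 + ε/4 by linarith) hcn
  linarith
end

section
/- For every x ∈ [0, ℓ], (1−δ)·(x/ℓ) ≤ Q(x) ≤ 1. -/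
lemma cheb_two (n : ℕ) (x : ℝ) : cheb (n+2) x = 2 * x * cheb (n+1) x - cheb n x := rfl

lemma cheb_ge_one {x : ℝ} (hx : 1 ≤ x) :
    ∀ n, 1 ≤ cheb n x ∧ cheb n x ≤ cheb (n+1) x := by
  intro n
  induction n with
  | zero => exact ⟨le_refl _, by simpa [cheb] using hx⟩
  | succ k ih =>
    obtain ⟨h1, h2⟩ := ih
    refine ⟨by linarith, ?_⟩
    rw [cheb_two]
    nlinarith

lemma cheb_mono_s11 {x y : ℝ} (hx : 1 ≤ x) (hxy : x ≤ y) :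
    ∀ n, cheb n x ≤ cheb n y ∧
      cheb n y - cheb n x ≤ cheb (n+1) y - cheb (n+1) x := by
  have hy : 1 ≤ y := le_trans hx hxy
  intro n
  induction n with
  | zero => simp [cheb, hxy]
  | succ k ih =>
    obtain ⟨h1, h2⟩ := ih
    have hky := (cheb_ge_one hy (k+1)).1
    constructor
    · linarith
    · rw [cheb_two, cheb_two]
      nlinarith

lemma cheb_convex (a b t : ℝ) (ha : 1 ≤ a) (hab : a ≤ b) (ht0 : 0 ≤ t) (ht1 : t ≤ 1) :
    ∀ n, 0 ≤ (1-t) * cheb n a + t * cheb n b - cheb n ((1-t)*a + t*b) ∧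
      (1-t) * cheb n a + t * cheb n b - cheb n ((1-t)*a + t*b) ≤
      (1-t) * cheb (n+1) a + t * cheb (n+1) b - cheb (n+1) ((1-t)*a + t*b) := by
  set x : ℝ := (1-t)*a + t*b with hxdef
  have hax : a ≤ x := by nlinarith
  have hxb : x ≤ b := by nlinarith
  have hx1 : 1 ≤ x := le_trans ha hax
  intro n
  induction n with
  | zero => simp [cheb, hxdef]
  | succ k ih =>
    obtain ⟨h1, h2⟩ := ih
    have hmono := (cheb_mono_s11 ha hab (k+1)).1
    constructor
    · linarith
    · rw [cheb_two, cheb_two, cheb_two]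
      have hid : (1-t) * (2*a*cheb (k+1) a) + t * (2*b*cheb (k+1) b) - 2*x*cheb (k+1) x
          = 2*x*((1-t)*cheb (k+1) a + t*cheb (k+1) b - cheb (k+1) x)
            + 2*t*(1-t)*(b-a)*(cheb (k+1) b - cheb (k+1) a) := by
        rw [hxdef]; ring
      nlinarith [mul_nonneg (mul_nonneg ht0 (by linarith : (0:ℝ) ≤ 1 - t))
        (mul_nonneg (by linarith : (0:ℝ) ≤ b - a) (by linarith : (0:ℝ) ≤ cheb (k+1) b - cheb (k+1) a))]

lemma cheb_at_one : ∀ n, cheb n 1 = 1 ∧ cheb (n+1) 1 = 1 := by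
  intro n
  induction n with
  | zero => simp [cheb]
  | succ k ih =>
    obtain ⟨h1, h2⟩ := ih
    exact ⟨h2, by rw [cheb_two, h1, h2]; ring⟩

/-- For every `x ∈ [0, ℓ]`, `(1−δ)·(x/ℓ) ≤ Q(x) ≤ 1`. -/
theorem Q_light_bounds (ℓ r : ℝ) (hℓ : 0 < ℓ) (hℓr : ℓ < r) (hr : r ≤ 1)
    (d : ℕ) (hd : 1 ≤ d) (m : ℝ) (hm : 0 ≤ m) :
    ∀ x ∈ Set.Icc (0 : ℝ) ℓ,
      (1 - cDelta ℓ r d) * (x / ℓ) ≤ Qfun ℓ r d m x ∧ Qfun ℓ r d m x ≤ 1 := by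
  intro x hx
  obtain ⟨hx0, hxl⟩ := hx
  have hrl : 0 < r - ℓ := by linarith
  have hr0 : 0 < r := by linarith
  set β : ℝ := (r + ℓ) / (r - ℓ) with hβ
  have hβ1 : 1 ≤ β := by rw [hβ, le_div_iff₀ hrl]; linarith
  have harg : 1 + 2 * (ℓ / r) / (1 - ℓ / r) = β := by
    rw [hβ]
    have h1 : 1 - ℓ / r ≠ 0 := by
      have : ℓ / r < 1 := (div_lt_one hr0).2 hℓr
      linarith
    field_simp
    ring
  set s : ℝ := (ℓ - x) / ℓ with hs
  have hs0 : 0 ≤ s := div_nonneg (by linarith) hℓ.le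
  have hs1 : s ≤ 1 := by rw [hs, div_le_one hℓ]; linarith
  have hsx : s = 1 - x / ℓ := by rw [hs]; field_simp
  have hpsix : psiMap ℓ r x = (1 - s) * 1 + s * β := by
    rw [psiMap, hβ, hs]
    field_simp
    ring
  -- key quantities
  set T : ℝ := cheb d β with hT
  have hT1 : 1 ≤ T := (cheb_ge_one hβ1 d).1
  have hT0 : 0 < T := by linarith
  have hδ : cDelta ℓ r d = 1 / T := by rw [cDelta, harg]
  have hδ0 : 0 < cDelta ℓ r d := by rw [hδ]; positivity
  set g : ℝ := cheb d (psiMap ℓ r x) with hg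
  have hψ1 : 1 ≤ psiMap ℓ r x := by
    rw [hpsix]; nlinarith
  have hg1 : 1 ≤ g := (cheb_ge_one hψ1 d).1
  -- convexity bound: g ≤ (1-s)*1 + s*T
  have hconv := (cheb_convex 1 β s (le_refl 1) hβ1 hs0 hs1 d).1
  rw [(cheb_at_one d).1] at hconv
  rw [← hpsix] at hconv
  have hgub : g ≤ (1 - s) + s * T := by rw [hg]; linarith
  -- exp bound
  have he0 : 0 < Real.exp (-(m * x)) := Real.exp_pos _
  have he1 : Real.exp (-(m * x)) ≤ 1 := by
    rw [Real.exp_le_one_iff]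
    have : 0 ≤ m * x := mul_nonneg hm hx0
    linarith
  have hQ : Qfun ℓ r d m x = 1 - Real.exp (-(m * x)) * (cDelta ℓ r d * g) := by
    rw [Qfun, Pd, hg]; ring
  constructor
  · have hxℓ : x / ℓ = 1 - s := by rw [hsx]; ring
    rw [hQ, hδ, hxℓ]
    set e : ℝ := Real.exp (-(m * x)) with he
    have hTT : (1 / T) * T = 1 := by field_simp
    have hTinv : 0 < 1 / T := by positivity
    have heg : e * g ≤ g := by nlinarith
    have hkey : (T - 1) * (1 - s) ≤ T - e * g := by nlinarith
    have hmul := mul_le_mul_of_nonneg_left hkey hTinv.le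
    have hL : (1 / T) * ((T - 1) * (1 - s)) = (1 - 1 / T) * (1 - s) := by
      field_simp
    have hR : (1 / T) * (T - e * g) = 1 - e * (1 / T * g) := by
      field_simp
    rw [hL, hR] at hmul
    linarith
  · rw [hQ]
    nlinarith [mul_pos he0 (mul_pos hδ0 (by linarith : (0:ℝ) < g))]
end
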